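/- arXiv:math/0211122 — 3 statements merged into one kernel-verified Lean document; each statement's English description precedes it below -/
import Mathlib

section
/- Fix a positive integer k and μ ∈ M*, and let e_1, …, e_l be an orthonormal basis of V. The function (v,τ) ↦ Θ_{μ,k}(v;τ) on V_ℂ × ℍ is smooth (holomorphic in each variable) and satisfies the heat-type eigenvalue equation −(2k/(2πi)) · ∂Θ_{μ,k}/∂τ + (1/(2πi)²) · Σ_{j=1}^{l} ∂²Θ_{μ,k}/∂v_j² = ⟨μ,μ⟩ · Θ_{μ,k}, where ∂/∂v_j denotes the complex directional derivative in the direction e_j and ∂/∂τ the derivative in the upper-half-plane variable. -/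
/-!
Each term of the theta series is the exponential of a function affine in `(v, τ)`:
`exp (2πik ⟨γ, v⟩ + πi (k ‖γ‖² - ‖μ‖²/k) τ)`. Hence `∂/∂τ` multiplies it by
`πi (k ‖γ‖² - ‖μ‖²/k)` and `Σⱼ ∂²/∂vⱼ²` by `(2πik)² ‖γ‖²`, and the heat-type equation holds
term by term. On sets where `Im τ` is bounded away from `0` and from `∞` and `v` is bounded, the
Gaussian factor `exp (-πk ‖γ‖² Im τ)` beats any growth `exp (a ‖γ‖)` of the coefficients, and the
lattice points `γ ∈ (1/k)μ + M` are summable against it; so the series may be differentiated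
term by term.
-/

open scoped BigOperators InnerProductSpace
open Complex Filter

noncomputable section

abbrev Evec (l : ℕ) := EuclideanSpace ℝ (Fin l)
abbrev EvecC (l : ℕ) := EuclideanSpace ℂ (Fin l)

/-- Inclusion of the real Euclidean space into its complexification. -/
def toC {l : ℕ} (x : Evec l) : EvecC l := WithLp.toLp 2 (fun i => (x i : ℂ))

/-- The complex-bilinear extension of the standard real inner product. -/
def cbil {l : ℕ} (v w : EvecC l) : ℂ := ∑ i, v i * w i

/-- The full-rank lattice spanned over `ℤ` by the `ℝ`-basis `b`. -/
def latt {l : ℕ} (b : Module.Basis (Fin l) ℝ (Evec l)) : Set (Evec l) :=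
  {x | ∃ c : Fin l → ℤ, x = ∑ i, c i • b i}

/-- The dual lattice `M* = {x | ⟪x, β⟫ ∈ ℤ for all β ∈ M}`. -/
def dualLatt {l : ℕ} (b : Module.Basis (Fin l) ℝ (Evec l)) : Set (Evec l) :=
  {x | ∀ β ∈ latt b, ∃ n : ℤ, ⟪x, β⟫_ℝ = (n : ℝ)}

/-- The lattice point `γ = (1/k)·μ + Σᵢ cᵢ·bᵢ` of the coset `(1/k)μ + M`. -/
def gam {l : ℕ} (b : Module.Basis (Fin l) ℝ (Evec l)) (k : ℕ) (μ : Evec l)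
    (c : Fin l → ℤ) : Evec l :=
  (k : ℝ)⁻¹ • μ + ∑ i, c i • b i

/-- The summand of the theta series `Θ_{μ,k}`, indexed by `γ ∈ (1/k)μ + M`. -/
def thetaTerm {l : ℕ} (b : Module.Basis (Fin l) ℝ (Evec l)) (k : ℕ) (μ : Evec l)
    (τ : ℂ) (v : EvecC l) (c : Fin l → ℤ) : ℂ :=
  Complex.exp (2 * (Real.pi : ℂ) * Complex.I * (k : ℂ) * cbil (toC (gam b k μ c)) v
    + (Real.pi : ℂ) * Complex.I * (k : ℂ) * τ * (⟪gam b k μ c, gam b k μ c⟫_ℝ : ℂ)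
    - (Real.pi : ℂ) * Complex.I * τ / (k : ℂ) * (⟪μ, μ⟫_ℝ : ℂ))

/-- The theta function `Θ_{μ,k}(v; τ)`. -/
def theta {l : ℕ} (b : Module.Basis (Fin l) ℝ (Evec l)) (k : ℕ) (μ : Evec l)
    (τ : ℂ) (v : EvecC l) : ℂ :=
  ∑' c : Fin l → ℤ, thetaTerm b k μ τ v c

lemma summable_pi_prod_of_nonneg {ι α : Type*} [Fintype ι] {f : α → ℝ} (hf0 : 0 ≤ f)
    (hf : Summable f) : Summable fun c : ι → α => ∏ i, f (c i) := by
  classical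
  refine summable_of_sum_le (fun c => Finset.prod_nonneg fun i _ => hf0 _)
    (c := (∑' a, f a) ^ Fintype.card ι) fun s => ?_
  calc ∑ c ∈ s, ∏ i, f (c i)
      ≤ ∑ c ∈ Fintype.piFinset fun i => s.image (· i), ∏ i, f (c i) :=
        Finset.sum_le_sum_of_subset_of_nonneg
          (fun c hc => Fintype.mem_piFinset.2 fun i => Finset.mem_image_of_mem _ hc)
          (fun _ _ _ => Finset.prod_nonneg fun i _ => hf0 _)
    _ = ∏ i, ∑ a ∈ s.image (· i), f a := (Finset.prod_univ_sum _ _).symm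
    _ ≤ ∏ _i : ι, ∑' a, f a :=
        Finset.prod_le_prod (fun i _ => Finset.sum_nonneg fun a _ => hf0 a)
          fun i _ => hf.sum_le_tsum _ fun a _ => hf0 a
    _ = (∑' a, f a) ^ Fintype.card ι := by simp

lemma summable_exp_neg_abs_int : Summable fun n : ℤ => Real.exp (-|(n : ℝ)|) :=
  Summable.of_nat_of_neg (by simpa using Real.summable_exp_neg_nat)
    (by simpa using Real.summable_exp_neg_nat)

namespace Module.Basis

variable {ι E : Type*} [Fintype ι] [NormedAddCommGroup E] [NormedSpace ℝ E]

lemma exists_abs_repr_le (b : Basis ι ℝ E) : ∃ C, ∀ x i, |b.repr x i| ≤ C * ‖x‖ := by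
  have := Module.Finite.of_basis b
  let e := b.equivFun.toContinuousLinearEquiv
  refine ⟨‖(e : E →L[ℝ] ι → ℝ)‖, fun x i => ?_⟩
  calc |b.repr x i| = ‖e x i‖ := rfl
    _ ≤ ‖e x‖ := norm_le_pi_norm _ i
    _ ≤ _ := ContinuousLinearMap.le_opNorm (e : E →L[ℝ] ι → ℝ) x

lemma summable_exp_mul_norm_sub_mul_sq (b : Basis ι ℝ E) (x₀ : E) (A : ℝ) {B : ℝ}
    (hB : 0 < B) :
    Summable fun c : ι → ℤ =>
      Real.exp (A * ‖x₀ + ∑ i, c i • b i‖ - B * ‖x₀ + ∑ i, c i • b i‖ ^ 2) := by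
  obtain ⟨C, hC⟩ := b.exists_abs_repr_le
  set a := Fintype.card ι * C
  set D := ∑ i, |b.repr x₀ i|
  have hcoord (c : ι → ℤ) : ∑ i, |(c i : ℝ)| ≤ a * ‖x₀ + ∑ i, c i • b i‖ + D := by
    have hrepr (i : ι) : b.repr (x₀ + ∑ i, c i • b i) i = b.repr x₀ i + c i := by
      classical
      simp [Finsupp.single_apply]
    calc ∑ i, |(c i : ℝ)| ≤ ∑ i, (C * ‖x₀ + ∑ i, c i • b i‖ + |b.repr x₀ i|) := by
          refine Finset.sum_le_sum fun i _ => ?_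
          have := hC (x₀ + ∑ i, c i • b i) i
          rw [hrepr] at this
          have := abs_sub (b.repr x₀ i + c i) (b.repr x₀ i)
          rw [add_sub_cancel_left] at this
          linarith
      _ = a * ‖x₀ + ∑ i, c i • b i‖ + D := by
          rw [Finset.sum_add_distrib, Finset.sum_const, Finset.card_univ, nsmul_eq_mul]; ring
  refine .of_nonneg_of_le (fun _ => (Real.exp_pos _).le) (fun c => ?_)
    ((summable_pi_prod_of_nonneg (fun _ => (Real.exp_pos _).le) summable_exp_neg_abs_int).mul_left
      (Real.exp ((A + a) ^ 2 / (4 * B) + D)))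
  set r := ‖x₀ + ∑ i, c i • b i‖
  have hquad : (A + a) * r - B * r ^ 2 ≤ (A + a) ^ 2 / (4 * B) := by
    rw [le_div_iff₀ (by positivity)]
    nlinarith [sq_nonneg (2 * B * r - (A + a))]
  rw [← Real.exp_sum, ← Real.exp_add, Real.exp_le_exp, Finset.sum_neg_distrib]
  linarith [hcoord c]

end Module.Basis

lemma le_exp_self (r : ℝ) : r ≤ Real.exp r := by linarith [Real.add_one_le_exp r]

section ThetaSeries

variable {l : ℕ}

lemma cbil_toC (x : Evec l) (v : EvecC l) : cbil (toC x) v = ⟪toC x, v⟫_ℂ := by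
  simp [cbil, toC, PiLp.inner_apply, mul_comm]

lemma norm_toC (x : Evec l) : ‖toC x‖ = ‖x‖ := by
  simp [toC, EuclideanSpace.norm_eq]

lemma sum_inner_toC_single_sq (x : Evec l) :
    ∑ j, ⟪toC x, EuclideanSpace.single j (1 : ℂ)⟫_ℂ ^ 2 = ((‖x‖ ^ 2 : ℝ) : ℂ) := by
  simp [EuclideanSpace.inner_single_right, toC, EuclideanSpace.norm_sq_eq]

variable (b : Module.Basis (Fin l) ℝ (Evec l)) (k : ℕ) (μ : Evec l)

def tauCoeff (c : Fin l → ℤ) : ℂ :=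
  Real.pi * Complex.I * ((k * ‖gam b k μ c‖ ^ 2 - ‖μ‖ ^ 2 / k : ℝ) : ℂ)

def vCoeff (c : Fin l → ℤ) : EvecC l →L[ℂ] ℂ :=
  (2 * Real.pi * Complex.I * k : ℂ) • innerSL ℂ (toC (gam b k μ c))

variable {b k μ}

lemma thetaTerm_eq_cexp (τ : ℂ) (v : EvecC l) (c : Fin l → ℤ) :
    thetaTerm b k μ τ v c = Complex.exp (vCoeff b k μ c v + tauCoeff b k μ c * τ) := by
  rw [thetaTerm, vCoeff, tauCoeff, cbil_toC, real_inner_self_eq_norm_sq,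
    real_inner_self_eq_norm_sq]
  simp only [smul_apply, innerSL_apply_apply, smul_eq_mul]
  push_cast
  ring_nf

lemma norm_vCoeff (c : Fin l → ℤ) : ‖vCoeff b k μ c‖ = 2 * Real.pi * k * ‖gam b k μ c‖ := by
  simp [vCoeff, norm_smul, innerSL_apply_norm, norm_toC, Real.pi_pos.le]

lemma norm_vCoeff_apply_pow_le (c : Fin l → ℤ) (w : EvecC l) (n : ℕ) :
    ‖vCoeff b k μ c w ^ n‖ ≤ (2 * Real.pi * k * ‖w‖) ^ n * Real.exp (n * ‖gam b k μ c‖) := by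
  rw [norm_pow, Real.exp_nat_mul, ← mul_pow]
  gcongr
  calc ‖vCoeff b k μ c w‖ ≤ ‖vCoeff b k μ c‖ * ‖w‖ := (vCoeff b k μ c).le_opNorm w
    _ ≤ 2 * Real.pi * k * ‖w‖ * Real.exp ‖gam b k μ c‖ := by
      rw [norm_vCoeff, mul_right_comm]
      gcongr
      exact le_exp_self _

lemma norm_tauCoeff_le (c : Fin l → ℤ) :
    ‖tauCoeff b k μ c‖ ≤ Real.pi * (k + ‖μ‖ ^ 2 / k) * Real.exp (2 * ‖gam b k μ c‖) := by
  set r := ‖gam b k μ c‖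
  have hr : r ^ 2 ≤ Real.exp (2 * r) := by
    rw [show 2 * r = r + r by ring, Real.exp_add, sq]
    exact mul_self_le_mul_self (norm_nonneg _) (le_exp_self r)
  have h1 : 1 ≤ Real.exp (2 * r) := Real.one_le_exp (by positivity)
  rw [tauCoeff, norm_mul, norm_mul, Complex.norm_real, Complex.norm_I, Complex.norm_real,
    Real.norm_eq_abs, Real.norm_eq_abs, abs_of_pos Real.pi_pos, mul_one, mul_assoc]
  gcongr
  calc |k * r ^ 2 - ‖μ‖ ^ 2 / k| ≤ k * r ^ 2 + ‖μ‖ ^ 2 / k := by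
        rw [abs_le]; constructor <;> nlinarith [sq_nonneg r, (by positivity : 0 ≤ ‖μ‖ ^ 2 / k)]
    _ ≤ (k + ‖μ‖ ^ 2 / k) * Real.exp (2 * r) := by
        have : 0 ≤ ‖μ‖ ^ 2 / k := by positivity
        nlinarith

lemma norm_thetaTerm_le (τ : ℂ) (v : EvecC l) (c : Fin l → ℤ) :
    ‖thetaTerm b k μ τ v c‖ ≤ Real.exp (2 * Real.pi * k * ‖gam b k μ c‖ * ‖v‖
      - Real.pi * (k * ‖gam b k μ c‖ ^ 2 - ‖μ‖ ^ 2 / k) * τ.im) := by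
  rw [thetaTerm_eq_cexp, Complex.norm_exp, Real.exp_le_exp, Complex.add_re]
  have hv : (vCoeff b k μ c v).re ≤ 2 * Real.pi * k * ‖gam b k μ c‖ * ‖v‖ := by
    rw [← norm_vCoeff]
    exact (Complex.re_le_norm _).trans ((vCoeff b k μ c).le_opNorm v)
  have hτ : (tauCoeff b k μ c * τ).re
      = -(Real.pi * (k * ‖gam b k μ c‖ ^ 2 - ‖μ‖ ^ 2 / k) * τ.im) := by
    simp only [tauCoeff, Complex.mul_re, Complex.mul_im, Complex.ofReal_re, Complex.ofReal_im,
      Complex.I_re, Complex.I_im]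
    ring
  linarith

lemma exp_mul_norm_thetaTerm_le (a : ℝ) {t₀ T R : ℝ} {τ : ℂ} (h₀ : t₀ ≤ τ.im) (hT : τ.im ≤ T)
    {v : EvecC l} (hv : ‖v‖ ≤ R) (c : Fin l → ℤ) :
    Real.exp (a * ‖gam b k μ c‖) * ‖thetaTerm b k μ τ v c‖ ≤
      Real.exp (Real.pi * ‖μ‖ ^ 2 / k * T) * Real.exp ((a + 2 * Real.pi * k * R) * ‖gam b k μ c‖
        - Real.pi * k * t₀ * ‖gam b k μ c‖ ^ 2) := by
  refine (mul_le_mul_of_nonneg_left (norm_thetaTerm_le τ v c) (Real.exp_pos _).le).trans ?_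
  set r := ‖gam b k μ c‖
  rw [← Real.exp_add, ← Real.exp_add, Real.exp_le_exp]
  have hv' : 2 * Real.pi * k * r * ‖v‖ ≤ 2 * Real.pi * k * r * R := by gcongr
  have h₀' : Real.pi * k * r ^ 2 * t₀ ≤ Real.pi * k * r ^ 2 * τ.im := by gcongr
  have hT' : Real.pi * ‖μ‖ ^ 2 / k * τ.im ≤ Real.pi * ‖μ‖ ^ 2 / k * T := by gcongr
  linear_combination hv' + h₀' + hT'

lemma exists_summable_bound_mul_norm_thetaTerm (hk : 0 < k) {K : (Fin l → ℤ) → ℝ} {Q a : ℝ}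
    (hK : ∀ c, K c ≤ Q * Real.exp (a * ‖gam b k μ c‖)) {t₀ : ℝ} (ht₀ : 0 < t₀) (T R : ℝ) :
    ∃ u : (Fin l → ℤ) → ℝ, Summable u ∧ ∀ c τ v, t₀ ≤ τ.im → τ.im ≤ T → ‖v‖ ≤ R →
      K c * ‖thetaTerm b k μ τ v c‖ ≤ u c := by
  refine ⟨fun c => |Q| * (Real.exp (Real.pi * ‖μ‖ ^ 2 / k * T) *
      Real.exp ((a + 2 * Real.pi * k * R) * ‖gam b k μ c‖ - Real.pi * k * t₀ * ‖gam b k μ c‖ ^ 2)),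
    ?_, fun c τ v h₀ hT hv => ?_⟩
  · exact ((b.summable_exp_mul_norm_sub_mul_sq _ _ (by positivity)).mul_left _).mul_left _
  calc K c * ‖thetaTerm b k μ τ v c‖
      ≤ |Q| * (Real.exp (a * ‖gam b k μ c‖) * ‖thetaTerm b k μ τ v c‖) := by
        rw [← mul_assoc]
        exact mul_le_mul_of_nonneg_right ((hK c).trans (by gcongr; exact le_abs_self Q))
          (norm_nonneg _)
    _ ≤ _ := mul_le_mul_of_nonneg_left (exp_mul_norm_thetaTerm_le a h₀ hT hv c) (abs_nonneg Q)

lemma summable_mul_thetaTerm (hk : 0 < k) {K : (Fin l → ℤ) → ℂ} {Q a : ℝ}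
    (hK : ∀ c, ‖K c‖ ≤ Q * Real.exp (a * ‖gam b k μ c‖)) {τ : ℂ} (hτ : 0 < τ.im)
    (v : EvecC l) : Summable fun c => K c * thetaTerm b k μ τ v c := by
  obtain ⟨u, hu, hbound⟩ := exists_summable_bound_mul_norm_thetaTerm hk hK hτ τ.im ‖v‖
  exact hu.of_norm_bounded fun c => (norm_mul _ _).trans_le (hbound c τ v le_rfl le_rfl le_rfl)

lemma summable_thetaTerm (hk : 0 < k) {τ : ℂ} (hτ : 0 < τ.im) (v : EvecC l) :
    Summable fun c => thetaTerm b k μ τ v c := by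
  simpa using summable_mul_thetaTerm (K := 1) (Q := 1) (a := 0) hk (by simp) hτ v

lemma hasFDerivAt_thetaTerm (τ : ℂ) (c : Fin l → ℤ) (v : EvecC l) :
    HasFDerivAt (fun w => thetaTerm b k μ τ w c) (thetaTerm b k μ τ v c • vCoeff b k μ c) v := by
  simp_rw [thetaTerm_eq_cexp]
  exact ((vCoeff b k μ c).hasFDerivAt.add_const _).cexp

lemma hasDerivAt_thetaTerm_tau (v : EvecC l) (c : Fin l → ℤ) (τ : ℂ) :
    HasDerivAt (fun σ => thetaTerm b k μ σ v c) (tauCoeff b k μ c * thetaTerm b k μ τ v c) τ := by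
  simp_rw [thetaTerm_eq_cexp]
  simpa [mul_comm] using
    (((hasDerivAt_id τ).const_mul (tauCoeff b k μ c)).const_add (vCoeff b k μ c v)).cexp

lemma hasDerivAt_thetaTerm_line (τ : ℂ) (v w : EvecC l) (c : Fin l → ℤ) (t : ℂ) :
    HasDerivAt (fun s : ℂ => thetaTerm b k μ τ (v + s • w) c)
      (vCoeff b k μ c w * thetaTerm b k μ τ (v + t • w) c) t := by
  have hline (s : ℂ) : thetaTerm b k μ τ (v + s • w) c
      = Complex.exp (vCoeff b k μ c v + tauCoeff b k μ c * τ + vCoeff b k μ c w * s) := by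
    rw [thetaTerm_eq_cexp, map_add, map_smul, smul_eq_mul]
    ring_nf
  simp_rw [hline]
  simpa [mul_comm] using
    (((hasDerivAt_id t).const_mul (vCoeff b k μ c w)).const_add
      (vCoeff b k μ c v + tauCoeff b k μ c * τ)).cexp

theorem hasFDerivAt_theta (hk : 0 < k) {τ : ℂ} (hτ : 0 < τ.im) (v : EvecC l) :
    HasFDerivAt (theta b k μ τ) (∑' c, thetaTerm b k μ τ v c • vCoeff b k μ c) v := by
  obtain ⟨u, hu, hbound⟩ :=
    exists_summable_bound_mul_norm_thetaTerm (K := fun c => ‖vCoeff b k μ c‖)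
      (Q := 2 * Real.pi * k) (a := 1) hk
      (fun c => by rw [norm_vCoeff, one_mul]; gcongr; exact le_exp_self _) hτ τ.im (‖v‖ + 1)
  refine hasFDerivAt_tsum_of_isPreconnected hu Metric.isOpen_ball
    (convex_ball v 1).isPreconnected (fun c w _ => hasFDerivAt_thetaTerm τ c w)
    (fun c w hw => ?_) (Metric.mem_ball_self one_pos) (summable_thetaTerm hk hτ v)
    (Metric.mem_ball_self one_pos)
  rw [norm_smul, mul_comm]
  exact hbound c τ w le_rfl le_rfl (norm_le_norm_add_const_of_dist_le (Metric.mem_ball.1 hw).le)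

theorem hasDerivAt_theta_tau (hk : 0 < k) {τ : ℂ} (hτ : 0 < τ.im) (v : EvecC l) :
    HasDerivAt (fun σ => theta b k μ σ v) (∑' c, tauCoeff b k μ c * thetaTerm b k μ τ v c) τ := by
  obtain ⟨u, hu, hbound⟩ :=
    exists_summable_bound_mul_norm_thetaTerm (K := fun c => ‖tauCoeff b k μ c‖) hk
      norm_tauCoeff_le (half_pos hτ) (2 * τ.im) ‖v‖
  have him {σ : ℂ} (hσ : σ ∈ Metric.ball τ (τ.im / 2)) : τ.im / 2 ≤ σ.im ∧ σ.im ≤ 2 * τ.im := by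
    rw [Metric.mem_ball, Complex.dist_eq] at hσ
    have := (Complex.abs_im_le_norm (σ - τ)).trans_lt hσ
    rw [Complex.sub_im, abs_lt] at this
    constructor <;> linarith
  refine hasDerivAt_tsum_of_isPreconnected hu Metric.isOpen_ball
    (convex_ball τ _).isPreconnected (fun c σ _ => hasDerivAt_thetaTerm_tau v c σ)
    (fun c σ hσ => ?_) (Metric.mem_ball_self (half_pos hτ)) (summable_thetaTerm hk hτ v)
    (Metric.mem_ball_self (half_pos hτ))
  rw [norm_mul]
  exact hbound c σ v (him hσ).1 (him hσ).2 le_rfl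

theorem hasDerivAt_tsum_mul_thetaTerm_line (hk : 0 < k) {K : (Fin l → ℤ) → ℂ} {Q a : ℝ}
    (hK : ∀ c, ‖K c‖ ≤ Q * Real.exp (a * ‖gam b k μ c‖)) {τ : ℂ} (hτ : 0 < τ.im)
    (v w : EvecC l) (t : ℂ) :
    HasDerivAt (fun s : ℂ => ∑' c, K c * thetaTerm b k μ τ (v + s • w) c)
      (∑' c, K c * vCoeff b k μ c w * thetaTerm b k μ τ (v + t • w) c) t := by
  -- The weights `K` let this lemma be applied again to the derivative it produces.
  have hK' (c : Fin l → ℤ) : ‖K c * vCoeff b k μ c w‖ ≤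
      Q * (2 * Real.pi * k * ‖w‖) * Real.exp ((a + 1) * ‖gam b k μ c‖) := by
    have hv := norm_vCoeff_apply_pow_le (b := b) (k := k) (μ := μ) c w 1
    rw [pow_one, pow_one, Nat.cast_one, one_mul] at hv
    rw [norm_mul, add_mul, one_mul, Real.exp_add]
    calc ‖K c‖ * ‖vCoeff b k μ c w‖
        ≤ Q * Real.exp (a * ‖gam b k μ c‖) * (2 * Real.pi * k * ‖w‖ * Real.exp ‖gam b k μ c‖) :=
          mul_le_mul (hK c) hv (norm_nonneg _) ((norm_nonneg _).trans (hK c))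
      _ = _ := by ring
  obtain ⟨u, hu, hbound⟩ :=
    exists_summable_bound_mul_norm_thetaTerm hk hK' hτ τ.im (‖v‖ + (‖t‖ + 1) * ‖w‖)
  refine hasDerivAt_tsum_of_isPreconnected hu Metric.isOpen_ball
    (convex_ball t 1).isPreconnected
    (fun c s _ => ((hasDerivAt_thetaTerm_line τ v w c s).const_mul (K c)).congr_deriv
      (mul_assoc _ _ _).symm)
    (fun c s hs => ?_) (Metric.mem_ball_self one_pos) (summable_mul_thetaTerm hk hK hτ (v + t • w))
    (Metric.mem_ball_self one_pos)
  rw [norm_mul]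
  refine hbound c τ _ le_rfl le_rfl ((norm_add_le _ _).trans ?_)
  rw [norm_smul]
  gcongr
  exact norm_le_norm_add_const_of_dist_le (Metric.mem_ball.1 hs).le

theorem hasDerivAt_theta_line (hk : 0 < k) {τ : ℂ} (hτ : 0 < τ.im) (v w : EvecC l) (t : ℂ) :
    HasDerivAt (fun s : ℂ => theta b k μ τ (v + s • w))
      (∑' c, vCoeff b k μ c w * thetaTerm b k μ τ (v + t • w) c) t := by
  simpa [theta] using
    hasDerivAt_tsum_mul_thetaTerm_line (K := 1) (Q := 1) (a := 0) hk (by simp) hτ v w t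

theorem iteratedDeriv_two_theta_line (hk : 0 < k) {τ : ℂ} (hτ : 0 < τ.im) (v w : EvecC l)
    (t : ℂ) :
    iteratedDeriv 2 (fun s : ℂ => theta b k μ τ (v + s • w)) t
      = ∑' c, vCoeff b k μ c w ^ 2 * thetaTerm b k μ τ (v + t • w) c := by
  have hderiv : deriv (fun s : ℂ => theta b k μ τ (v + s • w))
      = fun t => ∑' c, vCoeff b k μ c w * thetaTerm b k μ τ (v + t • w) c :=
    funext fun t => (hasDerivAt_theta_line hk hτ v w t).deriv
  rw [show 2 = 1 + 1 from rfl, iteratedDeriv_succ, iteratedDeriv_one, hderiv]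
  simpa [sq] using (hasDerivAt_tsum_mul_thetaTerm_line (K := fun c => vCoeff b k μ c w)
    (Q := 2 * Real.pi * k * ‖w‖) (a := 1) hk
    (fun c => by simpa using norm_vCoeff_apply_pow_le (b := b) (k := k) (μ := μ) c w 1)
    hτ v w t).deriv

lemma sum_vCoeff_single_sq (c : Fin l → ℤ) :
    ∑ j, vCoeff b k μ c (EuclideanSpace.single j 1) ^ 2
      = (2 * Real.pi * Complex.I * k) ^ 2 * ((‖gam b k μ c‖ ^ 2 : ℝ) : ℂ) := by
  simp only [vCoeff, smul_apply, innerSL_apply_apply, smul_eq_mul, mul_pow]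
  rw [← Finset.mul_sum, sum_inner_toC_single_sq]

lemma heat_identity_coeff (hk : k ≠ 0) (c : Fin l → ℤ) :
    -(2 * (k : ℂ) / (2 * (Real.pi : ℂ) * Complex.I)) * tauCoeff b k μ c
      + (1 / (2 * (Real.pi : ℂ) * Complex.I)) ^ 2 *
        ∑ j, vCoeff b k μ c (EuclideanSpace.single j 1) ^ 2 = (⟪μ, μ⟫_ℝ : ℂ) := by
  rw [sum_vCoeff_single_sq, tauCoeff, real_inner_self_eq_norm_sq]
  have := Real.pi_pos.ne'
  push_cast
  field_simp
  ring

theorem theta_heat_equation (hk : 0 < k) {τ : ℂ} (hτ : 0 < τ.im) (v : EvecC l) :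
    -(2 * (k : ℂ) / (2 * (Real.pi : ℂ) * Complex.I)) *
        deriv (fun τ' : ℂ => theta b k μ τ' v) τ
      + (1 / (2 * (Real.pi : ℂ) * Complex.I)) ^ 2 *
          ∑ j : Fin l, iteratedDeriv 2
            (fun t : ℂ => theta b k μ τ (v + t • EuclideanSpace.single j (1 : ℂ))) 0
      = (⟪μ, μ⟫_ℝ : ℂ) * theta b k μ τ v := by
  have S₁ := summable_mul_thetaTerm hk (norm_tauCoeff_le (b := b) (μ := μ)) hτ v
  have S₂ (j : Fin l) := summable_mul_thetaTerm
    (K := fun c => vCoeff b k μ c (EuclideanSpace.single j 1) ^ 2) hk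
    (fun c => norm_vCoeff_apply_pow_le (b := b) (k := k) (μ := μ) c _ 2) hτ v
  simp only [(hasDerivAt_theta_tau hk hτ v).deriv, iteratedDeriv_two_theta_line hk hτ,
    zero_smul, add_zero]
  calc _ = ∑' c, (-(2 * (k : ℂ) / (2 * (Real.pi : ℂ) * Complex.I)) *
          (tauCoeff b k μ c * thetaTerm b k μ τ v c)
        + (1 / (2 * (Real.pi : ℂ) * Complex.I)) ^ 2 * ∑ j : Fin l,
          vCoeff b k μ c (EuclideanSpace.single j 1) ^ 2 * thetaTerm b k μ τ v c) :=
        ((S₁.hasSum.mul_left _).add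
          ((hasSum_sum fun j _ => (S₂ j).hasSum).mul_left _)).tsum_eq.symm
    _ = ∑' c, (⟪μ, μ⟫_ℝ : ℂ) * thetaTerm b k μ τ v c := tsum_congr fun c => by
        rw [← Finset.sum_mul]
        linear_combination thetaTerm b k μ τ v c * heat_identity_coeff hk.ne' c
    _ = _ := tsum_mul_left

end ThetaSeries

theorem stmt5_general {l : ℕ} (b : Module.Basis (Fin l) ℝ (Evec l)) (k : ℕ) (hk : 0 < k)
    (μ : Evec l) :
    (∀ τ : ℂ, 0 < τ.im → Differentiable ℂ (fun v : EvecC l => theta b k μ τ v)) ∧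
    (∀ v : EvecC l, DifferentiableOn ℂ (fun τ : ℂ => theta b k μ τ v)
      {τ : ℂ | 0 < τ.im}) ∧
    (∀ τ : ℂ, 0 < τ.im → ∀ v : EvecC l,
      -(2 * (k : ℂ) / (2 * (Real.pi : ℂ) * Complex.I)) *
          deriv (fun τ' : ℂ => theta b k μ τ' v) τ
        + (1 / (2 * (Real.pi : ℂ) * Complex.I)) ^ 2 *
            ∑ j : Fin l, iteratedDeriv 2
              (fun t : ℂ => theta b k μ τ (v + t • EuclideanSpace.single j (1 : ℂ))) 0
        = (⟪μ, μ⟫_ℝ : ℂ) * theta b k μ τ v) :=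
  ⟨fun _ hτ v => (hasFDerivAt_theta hk hτ v).differentiableAt,
    fun v _ hτ => (hasDerivAt_theta_tau hk hτ v).differentiableAt.differentiableWithinAt,
    fun _ hτ v => theta_heat_equation hk hτ v⟩

/-- `Θ_{μ,k}` is holomorphic in each variable (in `v ∈ V_ℂ`, and in `τ` on the
upper half-plane), and satisfies the heat-type eigenvalue equation
`−(2k/(2πi))·∂Θ/∂τ + (1/(2πi)²)·Σⱼ ∂²Θ/∂vⱼ² = ⟨μ,μ⟩·Θ`, the `vⱼ`-derivatives being the
complex directional derivatives in the directions of the orthonormal basis `e₁, …, e_l`. -/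
theorem stmt5 {l : ℕ} (b : Module.Basis (Fin l) ℝ (Evec l)) (k : ℕ) (hk : 0 < k)
    (μ : Evec l) (hμ : μ ∈ dualLatt b) :
    (∀ τ : ℂ, 0 < τ.im → Differentiable ℂ (fun v : EvecC l => theta b k μ τ v)) ∧
    (∀ v : EvecC l, DifferentiableOn ℂ (fun τ : ℂ => theta b k μ τ v)
      {τ : ℂ | 0 < τ.im}) ∧
    (∀ τ : ℂ, 0 < τ.im → ∀ v : EvecC l,
      -(2 * (k : ℂ) / (2 * (Real.pi : ℂ) * Complex.I)) *
          deriv (fun τ' : ℂ => theta b k μ τ' v) τ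
        + (1 / (2 * (Real.pi : ℂ) * Complex.I)) ^ 2 *
            ∑ j : Fin l, iteratedDeriv 2
              (fun t : ℂ => theta b k μ τ (v + t • EuclideanSpace.single j (1 : ℂ))) 0
        = (⟪μ, μ⟫_ℝ : ℂ) * theta b k μ τ v) :=
  stmt5_general b k hk μ
end
end

section
/- Let Δ ⊂ V be a finite set of nonzero vectors with Δ = −Δ, let Δ₊ ⊂ Δ satisfy Δ = Δ₊ ⊔ (−Δ₊), let ρ = (1/2)·Σ_{α∈Δ₊} α, and suppose there is a real number h∨ such that Σ_{α∈Δ} ⟨α,x⟩⟨α,y⟩ = 2h∨·⟨x,y⟩ for all x, y ∈ V. Let M ⊂ V be a full-rank lattice such that ⟨α,β⟩ ∈ ℤ for all α ∈ Δ, β ∈ M and ⟨ρ,β⟩ ∈ ℤ for all β ∈ M. Fix τ in the upper half-plane, set q = exp(2πiτ), and define ℱ(h;τ) = exp(2πi⟨ρ,h⟩) · Π_{n≥1}(1 − qⁿ)^{dim V} · Π_{α∈Δ₊}(1 − exp(−2πi⟨α,h⟩)) · Π_{α∈Δ} Π_{n≥1}(1 − qⁿ·exp(−2πi⟨α,h⟩)).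 Then for all β, β' ∈ M and all h ∈ V_ℂ one has ℱ(h + β + τβ'; τ) = exp(−2πi·h∨·⟨β',h⟩ − πi·h∨·τ·⟨β',β'⟩) · ℱ(h;τ). -/
open scoped BigOperators InnerProductSpace
open Complex Filter

noncomputable section

/-- `q = exp(2πiτ)`. -/
def qOf (τ : ℂ) : ℂ := Complex.exp (2 * (Real.pi : ℂ) * Complex.I * τ)

/-- The half-sum `ρ = (1/2)·Σ_{α ∈ Δ₊} α`. -/
def rhoOf {l : ℕ} (Δp : Finset (Evec l)) : Evec l := (2 : ℝ)⁻¹ • ∑ α ∈ Δp, α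

/-- The Kac–Weyl denominator `ℱ(h;τ)`. -/
def kwDenom {l : ℕ} (Δ Δp : Finset (Evec l)) (τ : ℂ) (h : EvecC l) : ℂ :=
  Complex.exp (2 * (Real.pi : ℂ) * Complex.I * cbil (toC (rhoOf Δp)) h) *
    (∏' n : ℕ, (1 - qOf τ ^ (n + 1))) ^ l *
    (∏ α ∈ Δp, (1 - Complex.exp (-(2 * (Real.pi : ℂ) * Complex.I) * cbil (toC α) h))) *
    ∏' p : Δ × ℕ, (1 - qOf τ ^ (p.2 + 1) *
      Complex.exp (-(2 * (Real.pi : ℂ) * Complex.I) * cbil (toC (p.1 : Evec l)) h))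

/-!
Pairing each `α ∈ Δ₊` with `-α` writes `ℱ(h) = e^{2πi⟨ρ,h⟩} η^l ∏_{α ∈ Δ₊} θ(⟨α,h⟩)`, where
`θ(z) = (1-u) ∏ₙ (1-qⁿu)(1-qⁿu⁻¹)` with `u = e^{-2πiz}`. Shifting `u ↦ q⁻¹u` moves one factor
from one product to the other, so `θ` is `1`-periodic with `θ(z+τ) = -e^{-2πi(z+τ)} θ(z)`, and
iterating gives `θ(z+k+mτ) = e^{πim - 2πimz - πiτm(m+1)} θ(z)`. With `m_α = ⟨α,β'⟩ ∈ ℤ`, the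
Casimir identity gives `∑_{α ∈ Δ₊} m_α α = h∨ β'`, which turns the product of the multipliers into
`e^{-2πih∨⟨β',h⟩ - πiτ(h∨⟨β',β'⟩ + 2⟨ρ,β'⟩)}`; the factor `e^{2πiτ⟨ρ,β'⟩}` picked up by the
prefactor cancels the last term.
-/

open scoped Real

lemma multipliable_one_sub_of_summable_norm {ι : Type*} {f : ι → ℂ}
    (hf : Summable fun i => ‖f i‖) : Multipliable fun i => 1 - f i := by
  simpa [sub_eq_add_neg] using multipliable_one_add_of_summable (f := fun i => -f i) (by simpa)

section JacobiFactor

variable {q : ℂ}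

lemma summable_norm_pow_succ (hq : ‖q‖ < 1) : Summable fun n : ℕ => ‖q ^ (n + 1)‖ := by
  simpa using (summable_nat_add_iff 1).mpr (summable_geometric_of_lt_one (norm_nonneg q) hq)

lemma multipliable_one_sub_pow_succ_mul (hq : ‖q‖ < 1) (u : ℂ) :
    Multipliable fun n : ℕ => 1 - q ^ (n + 1) * u :=
  multipliable_one_sub_of_summable_norm <| by
    simpa [norm_mul] using (summable_norm_pow_succ hq).mul_right ‖u‖

lemma tprod_one_sub_pow_mul (hq : ‖q‖ < 1) (u : ℂ) :
    ∏' n : ℕ, (1 - q ^ n * u) = (1 - u) * ∏' n : ℕ, (1 - q ^ (n + 1) * u) := by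
  simpa using tprod_eq_zero_mul' (f := fun n : ℕ => 1 - q ^ n * u)
    (multipliable_one_sub_pow_succ_mul hq u)

/-- The contribution of a pair of roots `±α` to `kwDenom`, with `u = e^{-2πi⟨α,h⟩}`. -/
def jacobiFactor (q u : ℂ) : ℂ :=
  (1 - u) * (∏' n : ℕ, (1 - q ^ (n + 1) * u)) * ∏' n : ℕ, (1 - q ^ (n + 1) * u⁻¹)

lemma jacobiFactor_inv_mul (hq : ‖q‖ < 1) (hq0 : q ≠ 0) {u : ℂ} (hu : u ≠ 0) :
    jacobiFactor q (q⁻¹ * u) = -(q⁻¹ * u) * jacobiFactor q u := by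
  have hleft : ∏' n : ℕ, (1 - q ^ (n + 1) * (q⁻¹ * u)) = ∏' n : ℕ, (1 - q ^ n * u) :=
    tprod_congr fun n => by rw [pow_succ]; field_simp
  have hright : ∏' n : ℕ, (1 - q ^ (n + 1) * u⁻¹)
      = (1 - q * u⁻¹) * ∏' n : ℕ, (1 - q ^ (n + 1) * (q * u⁻¹)) := by
    rw [← tprod_one_sub_pow_mul hq]
    exact tprod_congr fun n => by ring
  rw [jacobiFactor, jacobiFactor, hleft, tprod_one_sub_pow_mul hq, hright, mul_inv, inv_inv]
  field_simp
  ring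

end JacobiFactor

lemma apply_add_int_mul_of_apply_add {f : ℂ → ℂ} {τ a b : ℂ}
    (hf : ∀ z, f (z + τ) = exp (a + b * z) * f z) (z : ℂ) (m : ℤ) :
    f (z + m * τ) = exp (m * a + m * b * z + m * (m - 1) / 2 * b * τ) * f z := by
  induction m using Int.induction_on with
  | zero => simp
  | succ m ih =>
    rw [show z + ((m + 1 : ℤ) : ℂ) * τ = z + ((m : ℤ) : ℂ) * τ + τ by push_cast; ring, hf, ih,
      ← mul_assoc, ← exp_add]
    congr 2
    push_cast
    ring
  | pred m ih =>
    have h := hf (z + ((-m - 1 : ℤ) : ℂ) * τ)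
    rw [show z + ((-m - 1 : ℤ) : ℂ) * τ + τ = z + ((-m : ℤ) : ℂ) * τ by push_cast; ring, ih,
      eq_comm, ← eq_inv_mul_iff_mul_eq₀ (exp_ne_zero _), ← exp_neg, ← mul_assoc, ← exp_add] at h
    rw [h]
    congr 2
    push_cast
    ring

lemma norm_qOf_lt_one {τ : ℂ} (hτ : 0 < τ.im) : ‖qOf τ‖ < 1 := by
  rw [qOf, norm_exp, Real.exp_lt_one_iff]
  simpa [mul_re, mul_im] using mul_pos Real.two_pi_pos hτ

def thetaFactor (τ z : ℂ) : ℂ := jacobiFactor (qOf τ) (exp (-(2 * π * I) * z))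

lemma thetaFactor_add_int (τ z : ℂ) (k : ℤ) : thetaFactor τ (z + k) = thetaFactor τ z := by
  rw [thetaFactor, mul_add, exp_add, show -(2 * π * I) * k = ((-k : ℤ) : ℂ) * (2 * π * I) by
    push_cast; ring, exp_int_mul_two_pi_mul_I, mul_one, thetaFactor]

lemma thetaFactor_add_self {τ : ℂ} (hτ : 0 < τ.im) (z : ℂ) :
    thetaFactor τ (z + τ) = exp (π * I - 2 * π * I * τ + -(2 * π * I) * z) * thetaFactor τ z := by
  have hu : exp (-(2 * π * I) * (z + τ)) = (qOf τ)⁻¹ * exp (-(2 * π * I) * z) := by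
    rw [qOf, ← exp_neg, ← exp_add]; ring_nf
  unfold thetaFactor
  rw [hu, jacobiFactor_inv_mul (norm_qOf_lt_one hτ) (exp_ne_zero _) (exp_ne_zero _), ← hu,
    show π * I - 2 * π * I * τ + -(2 * π * I) * z = π * I + -(2 * π * I) * (z + τ) by ring,
    exp_add, exp_pi_mul_I]
  ring

lemma thetaFactor_add_int_add_int_mul {τ : ℂ} (hτ : 0 < τ.im) (z : ℂ) (k m : ℤ) :
    thetaFactor τ (z + k + m * τ) =
      exp (π * I * m - 2 * π * I * m * z - π * I * τ * m * (m + 1)) * thetaFactor τ z := by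
  rw [add_right_comm, thetaFactor_add_int, apply_add_int_mul_of_apply_add (thetaFactor_add_self hτ)]
  congr 2
  ring

section RootSplitting

variable {E : Type*} [InvolutiveNeg E] {Δ Δp : Finset E}

@[to_additive]
lemma prod_eq_prod_pos_mul_neg {M : Type*} [CommMonoid M]
    (hcover : ∀ α, α ∈ Δ ↔ (α ∈ Δp ∨ -α ∈ Δp)) (hdisj : ∀ α ∈ Δp, -α ∉ Δp) (G : E → M) :
    ∏ α ∈ Δ, G α = ∏ α ∈ Δp, (G α * G (-α)) := by
  classical
  have hneg : ∀ α, α ∈ Δp.image (fun a => -a) ↔ -α ∈ Δp := fun α => by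
    simp only [Finset.mem_image]
    exact ⟨by rintro ⟨a, ha, rfl⟩; simpa using ha, fun hα => ⟨-α, hα, neg_neg α⟩⟩
  have hΔ : Δ = Δp ∪ Δp.image (fun a => -a) := by
    ext α
    rw [hcover, Finset.mem_union, hneg]
  have hd : Disjoint Δp (Δp.image (fun a => -a)) :=
    Finset.disjoint_left.2 fun α hα hα' => hdisj α hα ((hneg α).1 hα')
  rw [hΔ, Finset.prod_union hd, Finset.prod_image fun x _ y _ h => neg_injective h,
    ← Finset.prod_mul_distrib]

end RootSplitting

lemma sum_inner_smul_eq_smul_of_casimir {E : Type*} [NormedAddCommGroup E] [InnerProductSpace ℝ E]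
    {Δ Δp : Finset E} (hcover : ∀ α, α ∈ Δ ↔ (α ∈ Δp ∨ -α ∈ Δp)) (hdisj : ∀ α ∈ Δp, -α ∉ Δp)
    {c : ℝ} (hcas : ∀ x y : E, ∑ α ∈ Δ, ⟪α, x⟫_ℝ * ⟪α, y⟫_ℝ = 2 * c * ⟪x, y⟫_ℝ) (x : E) :
    ∑ α ∈ Δp, ⟪α, x⟫_ℝ • α = c • x := by
  have hfull : ∑ α ∈ Δ, ⟪α, x⟫_ℝ • α = (2 * c) • x := by
    refine ext_inner_right ℝ fun y => ?_
    simp only [sum_inner, real_inner_smul_left]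
    rw [← hcas]
  rw [sum_eq_sum_pos_add_neg hcover hdisj] at hfull
  simp only [inner_neg_left, neg_smul_neg, ← two_smul ℝ, ← Finset.smul_sum, mul_smul] at hfull
  exact smul_right_injective E two_ne_zero hfull

lemma sum_inner_eq_two_mul_inner_rhoOf {l : ℕ} (Δp : Finset (Evec l)) (x : Evec l) :
    ∑ α ∈ Δp, ⟪α, x⟫_ℝ = 2 * ⟪rhoOf Δp, x⟫_ℝ := by
  rw [rhoOf, real_inner_smul_left, sum_inner]
  ring

def cbilLeft {l : ℕ} (w : EvecC l) : Evec l →ₗ[ℝ] ℂ where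
  toFun x := cbil (toC x) w
  map_add' x y := by simp [cbil, toC, add_mul, Finset.sum_add_distrib]
  map_smul' c x := by simp [cbil, toC, Finset.mul_sum, mul_assoc, Complex.real_smul]

lemma cbilLeft_apply {l : ℕ} (w : EvecC l) (x : Evec l) : cbilLeft w x = cbil (toC x) w := rfl

lemma cbil_toC_add_toC_add_smul_toC {l : ℕ} (x β β' : Evec l) (τ : ℂ) (h : EvecC l) :
    cbil (toC x) (h + toC β + τ • toC β') = cbil (toC x) h + ⟪x, β⟫_ℝ + ⟪x, β'⟫_ℝ * τ := by
  simp only [cbil, toC, PiLp.add_apply, PiLp.smul_apply, smul_eq_mul, PiLp.inner_apply,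
    RCLike.inner_apply, conj_trivial, mul_add, Finset.sum_add_distrib]
  push_cast
  congr 1
  · congr 1
    exact Finset.sum_congr rfl fun i _ => mul_comm _ _
  · rw [Finset.sum_mul]
    exact Finset.sum_congr rfl fun i _ => by ring

lemma tprod_one_sub_pow_succ_mul_finset {ι : Type*} {q : ℂ} (hq : ‖q‖ < 1) (s : Finset ι)
    (w : ι → ℂ) :
    ∏' p : s × ℕ, (1 - q ^ (p.2 + 1) * w p.1) = ∏ i ∈ s, ∏' n : ℕ, (1 - q ^ (n + 1) * w i) := by
  have hsum : Summable fun p : s × ℕ => ‖q ^ (p.2 + 1) * w p.1‖ := by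
    have hw : Summable fun i : s => ‖w i‖ := Summable.of_finite
    exact (hw.mul_norm (summable_norm_pow_succ hq)).congr fun p => by rw [mul_comm]
  rw [(multipliable_one_sub_of_summable_norm hsum).tprod_prod'
    fun i => multipliable_one_sub_pow_succ_mul hq (w i), tprod_fintype]
  exact Finset.prod_coe_sort s fun i => ∏' n : ℕ, (1 - q ^ (n + 1) * w i)

lemma kwDenom_eq_prod_thetaFactor {l : ℕ} {Δ Δp : Finset (Evec l)}
    (hcover : ∀ α, α ∈ Δ ↔ (α ∈ Δp ∨ -α ∈ Δp)) (hdisj : ∀ α ∈ Δp, -α ∉ Δp)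
    {τ : ℂ} (hτ : 0 < τ.im) (h : EvecC l) :
    kwDenom Δ Δp τ h = exp (2 * π * I * cbil (toC (rhoOf Δp)) h) *
      (∏' n : ℕ, (1 - qOf τ ^ (n + 1))) ^ l * ∏ α ∈ Δp, thetaFactor τ (cbil (toC α) h) := by
  have hsplit := tprod_one_sub_pow_succ_mul_finset (norm_qOf_lt_one hτ) Δ
    fun α => exp (-(2 * π * I) * cbil (toC α) h)
  rw [kwDenom, hsplit, prod_eq_prod_pos_mul_neg hcover hdisj, mul_assoc, ← Finset.prod_mul_distrib]
  congr 2 with α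
  rw [thetaFactor, jacobiFactor, ← cbilLeft_apply, ← cbilLeft_apply, map_neg, mul_neg, exp_neg]
  ring

lemma sum_quasiPeriod_exponent {l : ℕ} {Δ Δp : Finset (Evec l)}
    (hcover : ∀ α, α ∈ Δ ↔ (α ∈ Δp ∨ -α ∈ Δp)) (hdisj : ∀ α ∈ Δp, -α ∉ Δp) {hv : ℝ}
    (hcox : ∀ x y : Evec l, ∑ α ∈ Δ, ⟪α, x⟫_ℝ * ⟪α, y⟫_ℝ = 2 * hv * ⟪x, y⟫_ℝ)
    (τ : ℂ) (β' : Evec l) (h : EvecC l) :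
    ∑ α ∈ Δp, (π * I * ⟪α, β'⟫_ℝ - 2 * π * I * ⟪α, β'⟫_ℝ * cbil (toC α) h
        - π * I * τ * ⟪α, β'⟫_ℝ * (⟪α, β'⟫_ℝ + 1)) =
      2 * π * I * ⟪rhoOf Δp, β'⟫_ℝ - 2 * π * I * hv * cbil (toC β') h
        - π * I * τ * (hv * ⟪β', β'⟫_ℝ + 2 * ⟪rhoOf Δp, β'⟫_ℝ) := by
  have hvec := sum_inner_smul_eq_smul_of_casimir hcover hdisj hcox β'
  have hlin : ∑ α ∈ Δp, (⟪α, β'⟫_ℝ : ℂ) = 2 * ⟪rhoOf Δp, β'⟫_ℝ := by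
    exact_mod_cast sum_inner_eq_two_mul_inner_rhoOf Δp β'
  have hpair : ∑ α ∈ Δp, (⟪α, β'⟫_ℝ : ℂ) * cbil (toC α) h = hv * cbil (toC β') h := by
    simpa only [map_sum, map_smul, cbilLeft_apply, Complex.real_smul] using
      congrArg (cbilLeft h) hvec
  have hquad : ∑ α ∈ Δp, (⟪α, β'⟫_ℝ : ℂ) * ⟪α, β'⟫_ℝ = hv * ⟪β', β'⟫_ℝ := by
    have := congrArg (⟪·, β'⟫_ℝ) hvec
    simp only [sum_inner, real_inner_smul_left] at this
    exact_mod_cast this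
  rw [Finset.sum_congr rfl fun α _ => show π * I * ⟪α, β'⟫_ℝ
      - 2 * π * I * ⟪α, β'⟫_ℝ * cbil (toC α) h - π * I * τ * ⟪α, β'⟫_ℝ * (⟪α, β'⟫_ℝ + 1)
      = π * I * ⟪α, β'⟫_ℝ - 2 * π * I * (⟪α, β'⟫_ℝ * cbil (toC α) h)
        - π * I * τ * ((⟪α, β'⟫_ℝ : ℂ) * ⟪α, β'⟫_ℝ + ⟪α, β'⟫_ℝ) by ring]
  simp only [Finset.sum_sub_distrib, Finset.sum_add_distrib, ← Finset.mul_sum]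
  rw [hlin, hpair, hquad]
  ring

lemma thetaFactor_cbil_shift {l : ℕ} {τ : ℂ} (hτ : 0 < τ.im) {α β β' : Evec l}
    (hβ : ∃ k : ℤ, ⟪α, β⟫_ℝ = k) (hβ' : ∃ m : ℤ, ⟪α, β'⟫_ℝ = m) (h : EvecC l) :
    thetaFactor τ (cbil (toC α) (h + toC β + τ • toC β')) =
      exp (π * I * ⟪α, β'⟫_ℝ - 2 * π * I * ⟪α, β'⟫_ℝ * cbil (toC α) h
        - π * I * τ * ⟪α, β'⟫_ℝ * (⟪α, β'⟫_ℝ + 1)) * thetaFactor τ (cbil (toC α) h) := by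
  obtain ⟨k, hk⟩ := hβ
  obtain ⟨m, hm⟩ := hβ'
  rw [cbil_toC_add_toC_add_smul_toC, hk, hm]
  push_cast
  exact thetaFactor_add_int_add_int_mul hτ _ k m

lemma exp_cbil_shift {l : ℕ} {x β : Evec l} (hβ : ∃ k : ℤ, ⟪x, β⟫_ℝ = k) (β' : Evec l) (τ : ℂ)
    (h : EvecC l) :
    exp (2 * π * I * cbil (toC x) (h + toC β + τ • toC β')) =
      exp (2 * π * I * ⟪x, β'⟫_ℝ * τ) * exp (2 * π * I * cbil (toC x) h) := by
  obtain ⟨k, hk⟩ := hβ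
  rw [cbil_toC_add_toC_add_smul_toC, hk, ← exp_add,
    show 2 * π * I * (cbil (toC x) h + ((k : ℝ) : ℂ) + ⟪x, β'⟫_ℝ * τ)
      = 2 * π * I * ⟪x, β'⟫_ℝ * τ + 2 * π * I * cbil (toC x) h + k * (2 * π * I) by
      push_cast; ring,
    exp_add _ (k * _), exp_int_mul_two_pi_mul_I, mul_one]

lemma prod_thetaFactor_shift {l : ℕ} {Δ Δp : Finset (Evec l)}
    (hcover : ∀ α, α ∈ Δ ↔ (α ∈ Δp ∨ -α ∈ Δp)) (hdisj : ∀ α ∈ Δp, -α ∉ Δp) {hv : ℝ}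
    (hcox : ∀ x y : Evec l, ∑ α ∈ Δ, ⟪α, x⟫_ℝ * ⟪α, y⟫_ℝ = 2 * hv * ⟪x, y⟫_ℝ)
    {β β' : Evec l} (hβ : ∀ α ∈ Δp, ∃ k : ℤ, ⟪α, β⟫_ℝ = k) (hβ' : ∀ α ∈ Δp, ∃ m : ℤ, ⟪α, β'⟫_ℝ = m)
    {τ : ℂ} (hτ : 0 < τ.im) (h : EvecC l) :
    ∏ α ∈ Δp, thetaFactor τ (cbil (toC α) (h + toC β + τ • toC β')) =
      exp (2 * π * I * ⟪rhoOf Δp, β'⟫_ℝ - 2 * π * I * hv * cbil (toC β') h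
        - π * I * τ * (hv * ⟪β', β'⟫_ℝ + 2 * ⟪rhoOf Δp, β'⟫_ℝ)) *
      ∏ α ∈ Δp, thetaFactor τ (cbil (toC α) h) := by
  rw [Finset.prod_congr rfl fun α hα => thetaFactor_cbil_shift hτ (hβ α hα) (hβ' α hα) h,
    Finset.prod_mul_distrib, ← exp_sum,
    sum_quasiPeriod_exponent hcover hdisj hcox]

theorem stmt12_general {l : ℕ} (Δ Δp : Finset (Evec l))
    (hcover : ∀ α : Evec l, α ∈ Δ ↔ (α ∈ Δp ∨ -α ∈ Δp))
    (hdisj : ∀ α ∈ Δp, -α ∉ Δp)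
    (hv : ℝ) (hcox : ∀ x y : Evec l, ∑ α ∈ Δ, ⟪α, x⟫_ℝ * ⟪α, y⟫_ℝ = 2 * hv * ⟪x, y⟫_ℝ)
    (b : Module.Basis (Fin l) ℝ (Evec l))
    (hαint : ∀ α ∈ Δ, ∀ β ∈ latt b, ∃ n : ℤ, ⟪α, β⟫_ℝ = (n : ℝ))
    (hρint : ∀ β ∈ latt b, ∃ n : ℤ, ⟪rhoOf Δp, β⟫_ℝ = (n : ℝ))
    (τ : ℂ) (hτ : 0 < τ.im) (β β' : Evec l) (hβ : β ∈ latt b) (hβ' : β' ∈ latt b)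
    (h : EvecC l) :
    kwDenom Δ Δp τ (h + toC β + τ • toC β') =
      Complex.exp (-(2 * (Real.pi : ℂ) * Complex.I * (hv : ℂ)) * cbil (toC β') h
          - (Real.pi : ℂ) * Complex.I * (hv : ℂ) * τ * (⟪β', β'⟫_ℝ : ℂ)) *
        kwDenom Δ Δp τ h := by
  have hΔp : ∀ α ∈ Δp, α ∈ Δ := fun α hα => (hcover α).2 (Or.inl hα)
  obtain ⟨r, hr⟩ := hρint β' hβ'
  have hmult : exp (2 * π * I * r * τ) * exp (2 * π * I * r - 2 * π * I * hv * cbil (toC β') h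
        - π * I * τ * (hv * ⟪β', β'⟫_ℝ + 2 * r)) =
      exp (-(2 * π * I * hv) * cbil (toC β') h - π * I * hv * τ * ⟪β', β'⟫_ℝ) := by
    rw [← exp_add, show 2 * π * I * r * τ + (2 * π * I * r - 2 * π * I * hv * cbil (toC β') h
        - π * I * τ * (hv * ⟪β', β'⟫_ℝ + 2 * r)) = -(2 * π * I * hv) * cbil (toC β') h
        - π * I * hv * τ * ⟪β', β'⟫_ℝ + r * (2 * π * I) by ring,
      exp_add, exp_int_mul_two_pi_mul_I, mul_one]
  rw [kwDenom_eq_prod_thetaFactor hcover hdisj hτ, kwDenom_eq_prod_thetaFactor hcover hdisj hτ,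
    prod_thetaFactor_shift hcover hdisj hcox (fun α hα => hαint α (hΔp α hα) β hβ)
      (fun α hα => hαint α (hΔp α hα) β' hβ') hτ,
    exp_cbil_shift (hρint β hβ), hr, ← hmult]
  push_cast
  ring

/-- Let `Δ = Δ₊ ⊔ (−Δ₊)` be a finite symmetric set of nonzero vectors,
`ρ = (1/2)Σ_{α∈Δ₊}α`, and suppose `Σ_{α∈Δ} ⟨α,x⟩⟨α,y⟩ = 2h∨⟨x,y⟩` for all `x, y ∈ V`.
If the full-rank lattice `M` satisfies `⟨α,β⟩ ∈ ℤ` and `⟨ρ,β⟩ ∈ ℤ` for all `α ∈ Δ`,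
`β ∈ M`, then for `τ ∈ ℍ` the Kac–Weyl denominator satisfies the level-`h∨`
quasi-periodicity law
`ℱ(h + β + τβ'; τ) = exp(−2πi·h∨·⟨β',h⟩ − πi·h∨·τ·⟨β',β'⟩)·ℱ(h;τ)` for `β, β' ∈ M`. -/
theorem stmt12 {l : ℕ} (Δ Δp : Finset (Evec l)) (hΔ0 : (0 : Evec l) ∉ Δ)
    (hsym : ∀ α : Evec l, α ∈ Δ ↔ -α ∈ Δ)
    (hcover : ∀ α : Evec l, α ∈ Δ ↔ (α ∈ Δp ∨ -α ∈ Δp))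
    (hdisj : ∀ α ∈ Δp, -α ∉ Δp)
    (hv : ℝ) (hcox : ∀ x y : Evec l, ∑ α ∈ Δ, ⟪α, x⟫_ℝ * ⟪α, y⟫_ℝ = 2 * hv * ⟪x, y⟫_ℝ)
    (b : Module.Basis (Fin l) ℝ (Evec l))
    (hαint : ∀ α ∈ Δ, ∀ β ∈ latt b, ∃ n : ℤ, ⟪α, β⟫_ℝ = (n : ℝ))
    (hρint : ∀ β ∈ latt b, ∃ n : ℤ, ⟪rhoOf Δp, β⟫_ℝ = (n : ℝ))
    (τ : ℂ) (hτ : 0 < τ.im) (β β' : Evec l) (hβ : β ∈ latt b) (hβ' : β' ∈ latt b)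
    (h : EvecC l) :
    kwDenom Δ Δp τ (h + toC β + τ • toC β') =
      Complex.exp (-(2 * (Real.pi : ℂ) * Complex.I * (hv : ℂ)) * cbil (toC β') h
          - (Real.pi : ℂ) * Complex.I * (hv : ℂ) * τ * (⟪β', β'⟫_ℝ : ℂ)) *
        kwDenom Δ Δp τ h :=
  stmt12_general Δ Δp hcover hdisj hv hcox b hαint hρint τ hτ β β' hβ hβ' h
end
end

section
/- Let V̂ = V × ℝ × ℝ, equipped with the symmetric bilinear form B((x,a,b),(x',a',b')) = ⟨x,x'⟩ + a·b' + a'·b. Let Π ⊂ V be a finite set, θ ∈ V, and K ∈ ℝ, and call the elements ᾱ = (α,0,0) for α ∈ Π together with α₀ = (−θ,0,1) the affine simple roots. Let λ, μ ∈ V and d ∈ ℝ, and set Λ = (λ, K, 0) and μ̂ = (μ, K, d). Assume: (a) Λ − μ̂ = Σ_{α∈Π} c_α·(α,0,0) + c₀·(−θ,0,1) with all coefficients c_α, c₀ ≥ 0; (b) B(Λ, ᾱ) > 0 for every α ∈ Π and B(Λ, α₀) > 0 (equivalently ⟨λ,α⟩ > 0 for all α ∈ Π and K − ⟨λ,θ⟩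 > 0); (c) B(μ̂, ᾱ) ≥ 0 for every affine simple root ᾱ; and (d) B(μ̂, μ̂) = B(Λ, Λ). Then μ̂ = Λ. -/
open scoped BigOperators RealInnerProductSpace

/-!
Write `Λ - μ̂ = ∑ cᵢ αᵢ` over the affine simple roots. As `B` is symmetric,
`0 = B(Λ,Λ) - B(μ̂,μ̂) = B(Λ + μ̂, Λ - μ̂) = ∑ cᵢ B(Λ + μ̂, αᵢ)`, a sum of nonnegative terms in
which every `B(Λ + μ̂, αᵢ)` is positive. Hence all `cᵢ` vanish and `μ̂ = Λ`.
-/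

open Finset

namespace LinearMap.BilinForm

variable {M ι : Type*} [AddCommGroup M] [Module ℝ M]

theorem apply_add_sub_of_isSymm {B : LinearMap.BilinForm ℝ M} (hB : B.IsSymm) (x y : M) :
    B (x + y) (x - y) = B x x - B y y := by
  have hxy : B y x = B x y := hB.eq y x
  simp only [map_add, map_sub, LinearMap.add_apply, hxy]
  ring

theorem eq_of_apply_self_eq_of_sub_eq_sum {B : LinearMap.BilinForm ℝ M} (hB : B.IsSymm)
    {Λ μ : M} (s : Finset ι) (a : ι → M) (c : ι → ℝ) (hc : ∀ i ∈ s, 0 ≤ c i)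
    (hsub : Λ - μ = ∑ i ∈ s, c i • a i) (hΛ : ∀ i ∈ s, 0 < B Λ (a i))
    (hμ : ∀ i ∈ s, 0 ≤ B μ (a i)) (hnorm : B μ μ = B Λ Λ) : μ = Λ := by
  have hpos : ∀ i ∈ s, 0 < B (Λ + μ) (a i) := fun i hi => by
    rw [map_add, LinearMap.add_apply]; linarith [hΛ i hi, hμ i hi]
  have hsum : ∑ i ∈ s, c i * B (Λ + μ) (a i) = 0 :=
    calc ∑ i ∈ s, c i * B (Λ + μ) (a i) = B (Λ + μ) (Λ - μ) := by
          simp only [hsub, map_sum, map_smul, smul_eq_mul]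
      _ = 0 := by rw [apply_add_sub_of_isSymm hB, hnorm, sub_self]
  have hcoeff : ∀ i ∈ s, c i = 0 := fun i hi =>
    (mul_eq_zero.mp ((sum_eq_zero_iff_of_nonneg fun j hj =>
      mul_nonneg (hc j hj) (hpos j hj).le).mp hsum i hi)).resolve_right (hpos i hi).ne'
  rw [eq_comm, ← sub_eq_zero, hsub]
  exact sum_eq_zero fun i hi => by rw [hcoeff i hi, zero_smul]

end LinearMap.BilinForm

section AffineForm

variable (V : Type*) [NormedAddCommGroup V] [InnerProductSpace ℝ V]

noncomputable def affineForm : LinearMap.BilinForm ℝ (V × ℝ × ℝ) :=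
  LinearMap.mk₂ ℝ (fun p q => ⟪p.1, q.1⟫ + p.2.1 * q.2.2 + q.2.1 * p.2.2)
    (fun p p' q => by simp only [Prod.fst_add, Prod.snd_add, inner_add_left]; ring)
    (fun r p q => by
      simp only [Prod.smul_fst, Prod.smul_snd, real_inner_smul_left, smul_eq_mul]; ring)
    (fun p q q' => by simp only [Prod.fst_add, Prod.snd_add, inner_add_right]; ring)
    (fun r p q => by
      simp only [Prod.smul_fst, Prod.smul_snd, real_inner_smul_right, smul_eq_mul]; ring)

theorem affineForm_apply (p q : V × ℝ × ℝ) :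
    affineForm V p q = ⟪p.1, q.1⟫ + p.2.1 * q.2.2 + q.2.1 * p.2.2 :=
  rfl

theorem affineForm_isSymm : (affineForm V).IsSymm :=
  LinearMap.BilinForm.isSymm_def.mpr fun p q => by
    simp only [affineForm_apply, real_inner_comm]
    ring

end AffineForm

/-- Let `V̂ = V × ℝ × ℝ` with the bilinear form
`B((x,a,b),(x',a',b')) = ⟨x,x'⟩ + a·b' + a'·b`.  If `Λ = (λ,K,0)` and `μ̂ = (μ,K,d)`
satisfy: (a) `Λ − μ̂` is a nonnegative combination of the affine simple roots `(α,0,0)`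
(`α ∈ Π`) and `(−θ,0,1)`; (b) `B(Λ,·) > 0` on all affine simple roots; (c) `B(μ̂,·) ≥ 0`
on all affine simple roots; and (d) `B(μ̂,μ̂) = B(Λ,Λ)`, then `μ̂ = Λ`. -/
theorem stmt13 {V : Type*} [NormedAddCommGroup V] [InnerProductSpace ℝ V]
    (P : Finset V) (θ : V) (K : ℝ) (lam μ : V) (d : ℝ)
    (B : V × ℝ × ℝ → V × ℝ × ℝ → ℝ)
    (hB : ∀ p q : V × ℝ × ℝ, B p q = ⟪p.1, q.1⟫ + p.2.1 * q.2.2 + q.2.1 * p.2.2)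
    (c : V → ℝ) (c₀ : ℝ) (hc : ∀ α ∈ P, 0 ≤ c α) (hc₀ : 0 ≤ c₀)
    (hdecomp : ((lam, K, 0) : V × ℝ × ℝ) - (μ, K, d) =
      (∑ α ∈ P, c α • ((α, 0, 0) : V × ℝ × ℝ)) + c₀ • ((-θ, 0, 1) : V × ℝ × ℝ))
    (hLamP : ∀ α ∈ P, 0 < B (lam, K, 0) (α, 0, 0))
    (hΛ0 : 0 < B (lam, K, 0) (-θ, 0, 1))
    (hmuP : ∀ α ∈ P, 0 ≤ B (μ, K, d) (α, 0, 0))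
    (hμ0 : 0 ≤ B (μ, K, d) (-θ, 0, 1))
    (hnorm : B (μ, K, d) (μ, K, d) = B (lam, K, 0) (lam, K, 0)) :
    ((μ, K, d) : V × ℝ × ℝ) = (lam, K, 0) := by
  obtain rfl : B = fun p q => affineForm V p q := funext₂ fun p q => hB p q
  refine LinearMap.BilinForm.eq_of_apply_self_eq_of_sub_eq_sum (affineForm_isSymm V)
    (insertNone P) (fun i => i.elim (-θ, 0, 1) fun α => (α, 0, 0)) (fun i => i.elim c₀ c)
    (forall_mem_insertNone.mpr ⟨hc₀, hc⟩) ?_ (forall_mem_insertNone.mpr ⟨hΛ0, hLamP⟩)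
    (forall_mem_insertNone.mpr ⟨hμ0, hmuP⟩) hnorm
  rw [hdecomp, sum_insertNone, add_comm]
  rfl
end
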